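/- Let Ψ : ℚ[K₁, K₂, G, Q] → ℚ[t₁, t₂, r] be the ℚ-algebra homomorphism determined by K₁ ↦ −(t₁ + t₂), K₂ ↦ −(t₁² + t₂²), G ↦ (t₁ − r)(t₂ + r), and Q ↦ (t₁ − r)(t₂ + r)·(t₁ − t₂)(2r − t₁ + t₂). Then the kernel of Ψ is the principal ideal generated by the polynomial Q² + G²(2K₂ + K₁²)(K₁² − 4G). In particular, the ℚ-subalgebra of ℚ[t₁, t₂, r] generated by the images of K₁, K₂, G, Q is isomorphic to ℚ[K₁, K₂, G, Q]/(Q² + G²(2K₂ + K₁²)(K₁² − 4G)). -/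

import Mathlib

/-!
Over `A = ℚ[K₁, K₂, G]` the relation `Q² + c` (with `c = G²(2K₂ + K₁²)(K₁² − 4G)`) is monic
quadratic in `Q`, so modulo it every polynomial is `b Q + a` with `a, b ∈ A`. Ψ is injective
on `A` (after a substitution of the variables `t₁, t₂, r` it becomes `expand 2` composed with
an automorphism) and `Ψ(Q)² = −Ψ(c)`, so `Ψ(b Q + a) = 0` forces `a² + b² c = 0`. Since `c`
has degree one in `K₂`, comparing the parities of the `K₂`-degrees gives `b = 0`, hence
`a = 0`. The isomorphism is then the first isomorphism theorem for Ψ, whose range is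
generated by the images of the variables.
-/

open MvPolynomial

namespace Polynomial

variable {R S : Type*} [CommRing R] [CommRing S]

theorem ker_eq_span_singleton_of_monic {φ : Polynomial R →+* S} {f : Polynomial R} (hf : f.Monic)
    (hφf : φ f = 0) (hinj : ∀ r : Polynomial R, r.degree < f.degree → φ r = 0 → r = 0) :
    RingHom.ker φ = Ideal.span {f} := by
  nontriviality R
  refine le_antisymm (fun p hp => ?_) ((Ideal.span_singleton_le_iff_mem _).2 hφf)
  have hmod : p %ₘ f = 0 := hinj _ (degree_modByMonic_lt p hf) (by
    rw [modByMonic_eq_sub_mul_div p f, map_sub, map_mul, RingHom.mem_ker.1 hp, hφf, zero_mul,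
      sub_zero])
  exact Ideal.mem_span_singleton.2 ((modByMonic_eq_zero_iff_dvd hf).1 hmod)

theorem ker_eq_span_X_sq_add_C {φ : Polynomial R →+* S} {c : R}
    (hC : Function.Injective (φ.comp C)) (hφ : φ (X ^ 2 + C c) = 0)
    (hc : ∀ a b : R, a ^ 2 + b ^ 2 * c = 0 → b = 0) :
    RingHom.ker φ = Ideal.span {X ^ 2 + C c} := by
  nontriviality R
  refine ker_eq_span_singleton_of_monic (monic_X_pow_add_C c two_ne_zero) hφ fun r hr hφr => ?_
  rw [degree_X_pow_add_C two_pos] at hr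
  obtain ⟨a, b, rfl⟩ : ∃ a b, r = C b * X + C a :=
    ⟨_, _, eq_X_add_C_of_degree_le_one (Order.le_of_lt_succ hr)⟩
  simp only [map_add, map_mul, map_pow] at hφ hφr
  have hb : b = 0 := hc a b (hC (by
    simp only [RingHom.comp_apply, map_add, map_mul, map_pow, map_zero]
    linear_combination (φ (C a) - φ (C b) * φ X) * hφr + φ (C b) ^ 2 * hφ))
  have ha : a = 0 := hC (by simpa [hb] using hφr)
  simp [ha, hb]

end Polynomial

namespace MvPolynomial

theorem eq_zero_of_sq_add_sq_mul_eq_zero {σ R : Type*} [CommRing R] [IsDomain R]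
    {a b c : MvPolynomial σ R} (i : σ) (hc : Odd (degreeOf i c)) (h : a ^ 2 + b ^ 2 * c = 0) :
    b = 0 := by
  by_contra hb
  have hc0 : c ≠ 0 := by rintro rfl; simp at hc
  have ha : a ≠ 0 := by
    rintro rfl
    exact mul_ne_zero (pow_ne_zero 2 hb) hc0 (by simpa using h)
  have hdeg := congrArg (degreeOf i) (eq_neg_of_add_eq_zero_left h)
  rw [degreeOf_neg, degreeOf_mul_eq (pow_ne_zero 2 hb) hc0, degreeOf_pow_eq _ _ _ ha,
    degreeOf_pow_eq _ _ _ hb] at hdeg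
  obtain ⟨k, hk⟩ := hc
  omega

section FinSuccLast

variable (R : Type*) [CommSemiring R] (n : ℕ)

noncomputable def finSuccLastEquiv :
    MvPolynomial (Fin (n + 1)) R ≃ₐ[R] Polynomial (MvPolynomial (Fin n) R) :=
  (renameEquiv R _root_.finSuccEquivLast).trans (optionEquivLeft R (Fin n))

variable {R n}

@[simp]
theorem finSuccLastEquiv_X_last : finSuccLastEquiv R n (X (Fin.last n)) = Polynomial.X := by
  simp [finSuccLastEquiv]

@[simp]
theorem finSuccLastEquiv_X_castSucc (i : Fin n) :
    finSuccLastEquiv R n (X i.castSucc) = Polynomial.C (X i) := by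
  simp [finSuccLastEquiv]

theorem finSuccLastEquiv_symm_C (p : MvPolynomial (Fin n) R) :
    (finSuccLastEquiv R n).symm (Polynomial.C p) = rename Fin.castSucc p := by
  rw [AlgEquiv.symm_apply_eq]
  induction p using MvPolynomial.induction_on with
  | C a => simp [finSuccLastEquiv]
  | add p q hp hq => simp [hp, hq]
  | mul_X p i hp => simp [hp]

end FinSuccLast

theorem adjoin_range_X_eq_range {σ R A : Type*} [CommSemiring R] [CommSemiring A] [Algebra R A]
    (Ψ : MvPolynomial σ R →ₐ[R] A) :
    Algebra.adjoin R (Set.range fun i => Ψ (X i)) = Ψ.range := by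
  rw [Algebra.adjoin_range_eq_range_aeval]
  exact congrArg AlgHom.range (aeval_unique Ψ).symm

theorem nonempty_quotient_algEquiv_adjoin {σ R A : Type*} [CommRing R] [CommRing A] [Algebra R A]
    (Ψ : MvPolynomial σ R →ₐ[R] A) {I : Ideal (MvPolynomial σ R)} (hI : RingHom.ker Ψ = I) :
    Nonempty ((MvPolynomial σ R ⧸ I) ≃ₐ[R] Algebra.adjoin R (Set.range fun i => Ψ (X i))) :=
  ⟨(Ideal.quotientEquivAlgOfEq R hI).symm.trans <| (Ideal.quotientKerEquivRange Ψ).trans <|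
    Subalgebra.equivOfEq _ _ (adjoin_range_X_eq_range Ψ).symm⟩

end MvPolynomial

namespace KernelOfPsi

noncomputable def psi : MvPolynomial (Fin 4) ℚ →ₐ[ℚ] MvPolynomial (Fin 3) ℚ :=
  aeval ![-(X 0 + X 1 : MvPolynomial (Fin 3) ℚ), -(X 0 ^ 2 + X 1 ^ 2), (X 0 - X 2) * (X 1 + X 2),
    (X 0 - X 2) * (X 1 + X 2) * ((X 0 - X 1) * (2 * X 2 - X 0 + X 1))]

noncomputable def psi₀ : MvPolynomial (Fin 3) ℚ →ₐ[ℚ] MvPolynomial (Fin 3) ℚ :=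
  aeval ![-(X 0 + X 1), -(X 0 ^ 2 + X 1 ^ 2), (X 0 - X 2) * (X 1 + X 2)]

noncomputable def relationConst : MvPolynomial (Fin 3) ℚ :=
  X 2 ^ 2 * (2 * X 1 + X 0 ^ 2) * (X 0 ^ 2 - 4 * X 2)

noncomputable def relation : MvPolynomial (Fin 4) ℚ :=
  X 3 ^ 2 + X 2 ^ 2 * (2 * X 1 + X 0 ^ 2) * (X 0 ^ 2 - 4 * X 2)

theorem psi_comp_rename_castSucc : psi.comp (rename Fin.castSucc) = psi₀ := by
  ext i : 1
  fin_cases i <;> simp [psi, psi₀]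

theorem psi_relation : psi relation = 0 := by
  simp only [psi, relation, Fin.isValue, aeval_X, Matrix.cons_val, Matrix.cons_val_zero,
    Matrix.cons_val_one, map_add, map_sub, map_mul, map_pow, map_ofNat]
  ring

theorem finSuccLastEquiv_relation :
    finSuccLastEquiv ℚ 3 relation = Polynomial.X ^ 2 + Polynomial.C relationConst := by
  have h0 : finSuccLastEquiv ℚ 3 (X 0) = Polynomial.C (X 0) := finSuccLastEquiv_X_castSucc 0
  have h1 : finSuccLastEquiv ℚ 3 (X 1) = Polynomial.C (X 1) := finSuccLastEquiv_X_castSucc 1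
  have h2 : finSuccLastEquiv ℚ 3 (X 2) = Polynomial.C (X 2) := finSuccLastEquiv_X_castSucc 2
  have h3 : finSuccLastEquiv ℚ 3 (X 3) = Polynomial.X := finSuccLastEquiv_X_last
  simp [h0, h1, h2, h3, relation, relationConst, map_ofNat]

/- Substituting `t₁ = a² + b`, `t₂ = a² − b`, `r = b − w` (the map `ρ`) sends
`K₁, K₂, G` to `−2a², −2a⁴ − 2b², a⁴ − w²`, i.e. `ρ ∘ psi₀ = expand 2 ∘ τ` for an
invertible triangular substitution `τ`. -/
theorem psi₀_injective : Function.Injective psi₀ := by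
  let τ : MvPolynomial (Fin 3) ℚ →ₐ[ℚ] MvPolynomial (Fin 3) ℚ :=
    aeval ![-2 * X 0, -2 * X 0 ^ 2 - 2 * X 1, X 0 ^ 2 - X 2]
  let τinv : MvPolynomial (Fin 3) ℚ →ₐ[ℚ] MvPolynomial (Fin 3) ℚ :=
    aeval ![C (-1 / 2) * X 0, C (-1 / 2) * X 1 - C (1 / 4) * X 0 ^ 2, C (1 / 4) * X 0 ^ 2 - X 2]
  let ρ : MvPolynomial (Fin 3) ℚ →ₐ[ℚ] MvPolynomial (Fin 3) ℚ :=
    aeval ![X 0 ^ 2 + X 1, X 0 ^ 2 - X 1, X 1 - X 2]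
  have hτ : τinv.comp τ = AlgHom.id ℚ _ := by
    ext i : 1
    fin_cases i <;> refine MvPolynomial.funext fun x => ?_ <;>
    simp only [τ, τinv, eval_C, eval_X, AlgHom.coe_id, id_eq, Fin.zero_eta, Fin.mk_one,
      Fin.reduceFinMk, Fin.isValue, AlgHom.coe_comp, Function.comp_apply, aeval_X, Matrix.cons_val,
      Matrix.cons_val_zero, Matrix.cons_val_one, map_sub, map_neg, map_mul, map_pow, map_ofNat] <;>
    ring
  have hρ : ρ.comp psi₀ = (expand 2).comp τ := by
    ext i : 1
    fin_cases i <;>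
    simp only [ρ, τ, psi₀, expand_X, Fin.zero_eta, Fin.mk_one, Fin.reduceFinMk, Fin.isValue,
      AlgHom.coe_comp, Function.comp_apply, aeval_X, Matrix.cons_val, Matrix.cons_val_zero,
      Matrix.cons_val_one, map_add, map_sub, map_neg, map_mul, map_pow, map_ofNat] <;>
    ring
  have hτinj : Function.Injective τ :=
    Function.LeftInverse.injective (g := τinv) fun p => AlgHom.congr_fun hτ p
  have hinj : Function.Injective ((expand 2).comp τ) := (expand_injective two_pos).comp hτinj
  rw [← hρ] at hinj
  exact Function.Injective.of_comp (f := ρ) hinj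

theorem degreeOf_one_relationConst : degreeOf 1 relationConst = 1 := by
  have hlin : degreeOf 1 (2 * X 1 + X 0 ^ 2 : MvPolynomial (Fin 3) ℚ) = 1 := by
    have h2 : degreeOf 1 (2 * X 1 : MvPolynomial (Fin 3) ℚ) = 1 := by
      rw [← map_ofNat C 2, degreeOf_C_mul _ _ (by simp), degreeOf_X_self]
    rw [degreeOf_add_eq_of_degreeOf_lt] <;> simp [h2, degreeOf_X_pow_of_ne]
  have hconst : degreeOf 1 (X 0 ^ 2 - 4 * X 2 : MvPolynomial (Fin 3) ℚ) = 0 := by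
    refine Nat.eq_zero_of_le_zero ((degreeOf_sub_le _ _ _).trans ?_)
    rw [← map_ofNat C 4, degreeOf_C_mul _ _ (by simp)]
    simp [degreeOf_X_pow_of_ne, degreeOf_X_of_ne]
  have hlin0 : (2 * X 1 + X 0 ^ 2 : MvPolynomial (Fin 3) ℚ) ≠ 0 := fun h => by simp [h] at hlin
  have hconst0 : (X 0 ^ 2 - 4 * X 2 : MvPolynomial (Fin 3) ℚ) ≠ 0 := fun h => by
    simpa using congrArg (eval ![1, 0, 0]) h
  rw [relationConst, degreeOf_mul_eq (mul_ne_zero (by simp) hlin0) hconst0,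
    degreeOf_mul_eq (by simp) hlin0, hlin, hconst, degreeOf_X_pow_of_ne _ (by decide)]

theorem ker_psi : RingHom.ker psi.toRingHom = Ideal.span {relation} := by
  set e := finSuccLastEquiv ℚ 3
  let φ := (psi.comp e.symm.toAlgHom).toRingHom
  have hφC : φ.comp Polynomial.C = psi₀.toRingHom := by
    refine RingHom.ext fun p => ?_
    simp [φ, e, finSuccLastEquiv_symm_C, ← psi_comp_rename_castSucc]
  have hkerφ : RingHom.ker φ = Ideal.span {Polynomial.X ^ 2 + Polynomial.C relationConst} := by
    refine Polynomial.ker_eq_span_X_sq_add_C (hφC ▸ psi₀_injective) ?_ fun a b h =>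
      eq_zero_of_sq_add_sq_mul_eq_zero 1 (degreeOf_one_relationConst ▸ odd_one) h
    simp [φ, e, ← finSuccLastEquiv_relation, psi_relation]
  have hpsi : psi.toRingHom = φ.comp (e.toRingEquiv : MvPolynomial (Fin 4) ℚ →+* _) := by
    refine RingHom.ext fun p => ?_
    simp [φ]
  rw [hpsi, ← RingHom.comap_ker, hkerφ, ← finSuccLastEquiv_relation, Ideal.comap_coe,
    ← Ideal.map_symm, Ideal.map_span, Set.image_singleton]
  simp [e]

end KernelOfPsi

theorem kernel_of_Psi
    (Ψ : MvPolynomial (Fin 4) ℚ →ₐ[ℚ] MvPolynomial (Fin 3) ℚ)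
    (hΨ : Ψ = aeval ![-(X 0 + X 1 : MvPolynomial (Fin 3) ℚ),
        -(X 0 ^ 2 + X 1 ^ 2), (X 0 - X 2) * (X 1 + X 2),
        (X 0 - X 2) * (X 1 + X 2) * ((X 0 - X 1) * (2 * X 2 - X 0 + X 1))]) :
    RingHom.ker Ψ.toRingHom = Ideal.span
      {X 3 ^ 2 + X 2 ^ 2 * (2 * X 1 + X 0 ^ 2) * (X 0 ^ 2 - 4 * X 2)} ∧
    Nonempty
      ((MvPolynomial (Fin 4) ℚ ⧸ Ideal.span
          {(X 3 : MvPolynomial (Fin 4) ℚ) ^ 2 +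
            X 2 ^ 2 * (2 * X 1 + X 0 ^ 2) * (X 0 ^ 2 - 4 * X 2)}) ≃ₐ[ℚ]
        (Algebra.adjoin ℚ
          ({Ψ (X 0), Ψ (X 1), Ψ (X 2), Ψ (X 3)} : Set (MvPolynomial (Fin 3) ℚ)))) := by
  have hker : RingHom.ker Ψ.toRingHom = Ideal.span {KernelOfPsi.relation} :=
    hΨ ▸ KernelOfPsi.ker_psi
  have hgens : ({Ψ (X 0), Ψ (X 1), Ψ (X 2), Ψ (X 3)} : Set (MvPolynomial (Fin 3) ℚ)) =
      Set.range fun i => Ψ (X i) := by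
    simp [Set.range, Fin.exists_fin_succ, Set.ext_iff, eq_comm]
  rw [hgens]
  exact ⟨hker, nonempty_quotient_algEquiv_adjoin Ψ hker⟩
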